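/- arXiv:2010.03974 — 12 statements merged into one kernel-verified Lean document; each statement's English description precedes it below -/
import Mathlib

section
/- Let f : M → ℂ be a non-zero solution of the functional equation f(xσ(y)) + f(τ(y)x) = 2f(x)f(y) for all x, y ∈ M. Then f(e) = 1 and f(σ(x)) + f(τ(x)) = 2f(x) for all x ∈ M. -/
section UnitPreservation

variable {M : Type*} [Monoid M]

theorem map_one_of_map_mul_of_involutive {σ : M → M}
    (hmul : ∀ x y : M, σ (x * y) = σ x * σ y) (hinv : ∀ x : M, σ (σ x) = x) : σ 1 = 1 := by
  simpa [hinv] using (hmul (σ 1) 1).symm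

theorem map_one_of_map_mul_rev_of_involutive {τ : M → M}
    (hmul : ∀ x y : M, τ (x * y) = τ y * τ x) (hinv : ∀ x : M, τ (τ x) = x) : τ 1 = 1 := by
  simpa [hinv] using (hmul 1 (τ 1)).symm

end UnitPreservation

section FunctionalEquation

variable {M R : Type*} [Monoid M] [CommRing R] {σ τ : M → M} {f : M → R}

theorem apply_one_eq_one_of_funeq [IsDomain R] [NeZero (2 : R)] (hσ1 : σ 1 = 1) (hτ1 : τ 1 = 1)
    (hf : f ≠ 0) (heq : ∀ x y : M, f (x * σ y) + f (τ y * x) = 2 * f x * f y) : f 1 = 1 := by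
  obtain ⟨x₀, hx₀⟩ := Function.ne_iff.mp hf
  have h : 2 * f x₀ * f 1 = 2 * f x₀ := by
    simpa [hσ1, hτ1, two_mul] using (heq x₀ 1).symm
  exact (mul_eq_left₀ (mul_ne_zero two_ne_zero hx₀)).mp h

theorem apply_map_add_apply_map_of_funeq (h1 : f 1 = 1)
    (heq : ∀ x y : M, f (x * σ y) + f (τ y * x) = 2 * f x * f y) (x : M) :
    f (σ x) + f (τ x) = 2 * f x := by
  simpa [h1] using heq 1 x

end FunctionalEquation

theorem stmt0 {M : Type*} [Monoid M] (σ τ : M → M)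
    (hσmul : ∀ x y : M, σ (x * y) = σ x * σ y) (hσinv : ∀ x : M, σ (σ x) = x)
    (hτmul : ∀ x y : M, τ (x * y) = τ y * τ x) (hτinv : ∀ x : M, τ (τ x) = x)
    (f : M → ℂ) (hf : f ≠ 0)
    (heq : ∀ x y : M, f (x * σ y) + f (τ y * x) = 2 * f x * f y) :
    f 1 = 1 ∧ ∀ x : M, f (σ x) + f (τ x) = 2 * f x := by
  have hf1 : f 1 = 1 := apply_one_eq_one_of_funeq
    (map_one_of_map_mul_of_involutive hσmul hσinv)
    (map_one_of_map_mul_rev_of_involutive hτmul hτinv) hf heq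
  exact ⟨hf1, apply_map_add_apply_map_of_funeq hf1 heq⟩
end

section
/- Let f : S → ℂ be a non-zero solution of the functional equation f(xσ(y)) + f(τ(y)x) = 2f(x)f(y) for all x, y ∈ S. Then f(σ(a)σ(x)σ(y)) + f(σ(a)σ(y)σ(x)) = 2f(σ(a))f(yx) + 2f(x)f(σ(a)σ(y)) + 2f(σ(a)σ(x))f(y) − 4f(σ(a))f(x)f(y) for all a, x, y ∈ S. -/
theorem stmt1_general {S : Type*} [Semigroup S] (σ τ : S → S)
    (hσmul : ∀ x y : S, σ (x * y) = σ x * σ y)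
    (hτmul : ∀ x y : S, τ (x * y) = τ y * τ x)
    (f : S → ℂ)
    (heq : ∀ x y : S, f (x * σ y) + f (τ y * x) = 2 * f x * f y) :
    ∀ a x y : S,
      f (σ a * σ x * σ y) + f (σ a * σ y * σ x) =
        2 * f (σ a) * f (y * x) + 2 * f x * f (σ a * σ y) +
          2 * f (σ a * σ x) * f y - 4 * f (σ a) * f x * f y := by
  intro a x y
  -- The mixed terms f(τy σa σx) and f(τx τy σa) cancel between these three instances,
  -- and the fourth eliminates f(τy σa).
  have hxy := heq (σ a * σ x) y
  have hyx := heq (τ y * σ a) x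
  have hprod := heq (σ a) (y * x)
  have hy := heq (σ a) y
  rw [hσmul, hτmul] at hprod
  simp only [mul_assoc] at hxy hyx hprod ⊢
  linear_combination hxy - hyx + hprod - 2 * f x * hy

theorem stmt1 {S : Type*} [Semigroup S] (σ τ : S → S)
    (hσmul : ∀ x y : S, σ (x * y) = σ x * σ y) (hσinv : ∀ x : S, σ (σ x) = x)
    (hτmul : ∀ x y : S, τ (x * y) = τ y * τ x) (hτinv : ∀ x : S, τ (τ x) = x)
    (f : S → ℂ) (hf : f ≠ 0)
    (heq : ∀ x y : S, f (x * σ y) + f (τ y * x) = 2 * f x * f y) :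
    ∀ a x y : S,
      f (σ a * σ x * σ y) + f (σ a * σ y * σ x) =
        2 * f (σ a) * f (y * x) + 2 * f x * f (σ a * σ y) +
          2 * f (σ a * σ x) * f y - 4 * f (σ a) * f x * f y :=
  stmt1_general σ τ hσmul hτmul f heq
end

section
/- Let f : S → ℂ be a non-zero solution of the functional equation f(xσ(y)) + f(τ(y)x) = 2f(x)f(y) for all x, y ∈ S. Then f is central, i.e. f(xy) = f(yx) for all x, y ∈ S. -/
/-!
Applying the equation to the pairs `(x σ y, z)` and `(τ y x, z)` and adding gives
`f (x σ y σ z) + f (τ z τ y x) + [f (τ z x σ y) + f (τ y x σ z)] = 4 f(x) f(y) f(z)`;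
the bracket and the right-hand side are symmetric in `y, z`, hence so is
`f (x σ y σ z) + f (τ z τ y x) = f (x σ (y z)) + f (τ (y z) x) = 2 f(x) f(y z)`.
Choosing `x` with `f x ≠ 0` gives `f (y z) = f (z y)`.
-/

section FunctionalEquation

variable {S R : Type*} [Semigroup S] [CommRing R] {σ τ : S → S} {f : S → R}

theorem add_apply_mul_mul_comm_of_functional_eq
    (heq : ∀ x y : S, f (x * σ y) + f (τ y * x) = 2 * f x * f y) (x y z : S) :
    f (x * σ y * σ z) + f (τ z * τ y * x) = f (x * σ z * σ y) + f (τ y * τ z * x) := by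
  have hyz := heq (x * σ y) z
  have hyz' := heq (τ y * x) z
  have hzy := heq (x * σ z) y
  have hzy' := heq (τ z * x) y
  simp only [← mul_assoc] at hyz hyz' hzy hzy'
  linear_combination hyz + hyz' - hzy - hzy' + 2 * f z * heq x y - 2 * f y * heq x z

theorem two_mul_mul_apply_mul_comm_of_functional_eq
    (hσmul : ∀ x y : S, σ (x * y) = σ x * σ y) (hτmul : ∀ x y : S, τ (x * y) = τ y * τ x)
    (heq : ∀ x y : S, f (x * σ y) + f (τ y * x) = 2 * f x * f y) (x a b : S) :
    2 * f x * f (a * b) = 2 * f x * f (b * a) := by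
  have hab := heq x (a * b)
  have hba := heq x (b * a)
  rw [hσmul, hτmul, ← mul_assoc] at hab hba
  rw [← hab, ← hba, add_apply_mul_mul_comm_of_functional_eq heq]

end FunctionalEquation

theorem stmt2_general {S : Type*} [Semigroup S] (σ τ : S → S)
    (hσmul : ∀ x y : S, σ (x * y) = σ x * σ y)
    (hτmul : ∀ x y : S, τ (x * y) = τ y * τ x)
    (f : S → ℂ) (hf : f ≠ 0)
    (heq : ∀ x y : S, f (x * σ y) + f (τ y * x) = 2 * f x * f y) :
    ∀ x y : S, f (x * y) = f (y * x) := by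
  obtain ⟨x₀, hx₀⟩ := Function.ne_iff.mp hf
  intro a b
  exact mul_left_cancel₀ (mul_ne_zero two_ne_zero hx₀)
    (two_mul_mul_apply_mul_comm_of_functional_eq hσmul hτmul heq x₀ a b)

theorem stmt2 {S : Type*} [Semigroup S] (σ τ : S → S)
    (hσmul : ∀ x y : S, σ (x * y) = σ x * σ y) (hσinv : ∀ x : S, σ (σ x) = x)
    (hτmul : ∀ x y : S, τ (x * y) = τ y * τ x) (hτinv : ∀ x : S, τ (τ x) = x)
    (f : S → ℂ) (hf : f ≠ 0)
    (heq : ∀ x y : S, f (x * σ y) + f (τ y * x) = 2 * f x * f y) :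
    ∀ x y : S, f (x * y) = f (y * x) :=
  stmt2_general σ τ hσmul hτmul f hf heq
end

section
/- Let f : S → ℂ be a non-zero solution of the functional equation f(xσ(y)) + f(τ(y)x) = 2f(x)f(y) for all x, y ∈ S. Then there exists a non-zero constant λ ∈ ℂ such that f(σ(x)) + f(τ(x)) = λ f(x) for all x ∈ S. -/
/-!
The key fact is that `f` is central, `f (y z) = f (z y)`. With it, the equation at `(σ x, y)` and
`(τ x, y)`, minus the same with `x` and `y` swapped, gives `g x * f y = g y * f x` for
`g x = f (σ x) + f (τ x)`, hence `g = λ f`. If `λ = 0`, then `f` obeys the sine addition law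
`f (x z) = f x f (σ z) + f z f (σ x)`, and the equation at `(x, x)` becomes `2 f x ^ 2 = 0`.
-/

theorem exists_eq_const_mul_of_mul_comm {α K : Type*} [Field K] {g f : α → K} (hf : f ≠ 0)
    (h : ∀ x y, g x * f y = g y * f x) : ∃ c, ∀ x, g x = c * f x := by
  obtain ⟨x₀, hx₀⟩ : ∃ x, f x ≠ 0 := Function.ne_iff.mp hf
  refine ⟨g x₀ / f x₀, fun x => ?_⟩
  rw [div_mul_eq_mul_div, eq_div_iff hx₀]
  exact h x x₀

section FunctionalEquation

variable {S K : Type*} [Semigroup S] [Field K] [CharZero K] {σ τ : S → S} {f : S → K}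

theorem apply_mul_comm_of_functional_equation
    (hσmul : ∀ x y : S, σ (x * y) = σ x * σ y) (hτmul : ∀ x y : S, τ (x * y) = τ y * τ x)
    (heq : ∀ x y : S, f (x * σ y) + f (τ y * x) = 2 * f x * f y) (hf : f ≠ 0) (y z : S) :
    f (y * z) = f (z * y) := by
  obtain ⟨x₀, hx₀⟩ : ∃ x, f x ≠ 0 := Function.ne_iff.mp hf
  -- `f (τ z x₀ σ y) + f (τ y x₀ σ z) = 4 f x₀ f y f z - 2 f x₀ f (y z)`, and the left side is
  -- symmetric in `y` and `z`.
  have cross (y z : S) : f (τ z * (x₀ * σ y)) + f (τ y * (x₀ * σ z))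
      = 4 * f x₀ * f y * f z - 2 * f x₀ * f (y * z) := by
    have h := heq x₀ (y * z)
    rw [hσmul, hτmul] at h
    have h₁ := heq (x₀ * σ y) z
    have h₂ := heq (τ y * x₀) z
    simp only [mul_assoc] at h h₁ h₂
    linear_combination h₁ + h₂ - h + 2 * f z * heq x₀ y
  refine mul_left_cancel₀ hx₀ ?_
  linear_combination (cross y z - cross z y) / 2

theorem apply_sigma_add_apply_tau_mul_comm
    (heq : ∀ x y : S, f (x * σ y) + f (τ y * x) = 2 * f x * f y)
    (hc : ∀ y z : S, f (y * z) = f (z * y)) (x y : S) :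
    (f (σ x) + f (τ x)) * f y = (f (σ y) + f (τ y)) * f x := by
  linear_combination (heq (σ y) x + heq (τ y) x - heq (σ x) y - heq (τ x) y
    + hc (σ x) (σ y) + hc (τ y) (τ x)) / 2

theorem apply_mul_eq_of_apply_sigma_add_apply_tau_eq_zero
    (hσmul : ∀ x y : S, σ (x * y) = σ x * σ y) (hσinv : ∀ x : S, σ (σ x) = x)
    (hτmul : ∀ x y : S, τ (x * y) = τ y * τ x)
    (heq : ∀ x y : S, f (x * σ y) + f (τ y * x) = 2 * f x * f y)
    (hc : ∀ y z : S, f (y * z) = f (z * y)) (hg : ∀ x : S, f (σ x) + f (τ x) = 0) (x z : S) :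
    f (x * z) = f x * f (σ z) + f z * f (σ x) := by
  have heq' (x y : S) : f (x * σ y) + f (x * τ y) = 2 * f x * f y := by
    linear_combination heq x y - hc (τ y) x
  have mixed (x y : S) : f (σ x * τ y) = -f (τ x * σ y) := by
    have hxy := hg (x * y)
    rw [hσmul, hτmul] at hxy
    linear_combination heq (σ x) y + heq (τ x) y - hxy - hc (τ y) (σ x) + 2 * f y * hg x
  have shifted (x w : S) : f (σ x * σ w) = f (σ x) * f w + f (σ w) * f x := by
    linear_combination (heq' (σ x) w + heq' (σ w) x - mixed x w + hc (τ x) (σ w)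
      + hc (σ x) (σ w)) / 2
  simpa only [hσinv] using shifted (σ x) (σ z)

theorem eq_zero_of_apply_sigma_add_apply_tau_eq_zero
    (hσmul : ∀ x y : S, σ (x * y) = σ x * σ y) (hσinv : ∀ x : S, σ (σ x) = x)
    (hτmul : ∀ x y : S, τ (x * y) = τ y * τ x) (hτinv : ∀ x : S, τ (τ x) = x)
    (heq : ∀ x y : S, f (x * σ y) + f (τ y * x) = 2 * f x * f y)
    (hc : ∀ y z : S, f (y * z) = f (z * y)) (hg : ∀ x : S, f (σ x) + f (τ x) = 0) :
    f = 0 := by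
  have add_law := apply_mul_eq_of_apply_sigma_add_apply_tau_eq_zero hσmul hσinv hτmul heq hc hg
  funext x
  have hστ : f (σ (τ x)) = -f x := by
    have h := hg (τ x)
    rw [hτinv] at h
    linear_combination h
  have h₁ := add_law x (σ x)
  rw [hσinv] at h₁
  have hsq : f x * f x = 0 := by
    linear_combination -(heq x x - h₁ - add_law (τ x) x - f (σ x) * hg x - f x * hστ) / 2
  exact mul_self_eq_zero.mp hsq

end FunctionalEquation

theorem stmt3 {S : Type*} [Semigroup S] (σ τ : S → S)
    (hσmul : ∀ x y : S, σ (x * y) = σ x * σ y) (hσinv : ∀ x : S, σ (σ x) = x)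
    (hτmul : ∀ x y : S, τ (x * y) = τ y * τ x) (hτinv : ∀ x : S, τ (τ x) = x)
    (f : S → ℂ) (hf : f ≠ 0)
    (heq : ∀ x y : S, f (x * σ y) + f (τ y * x) = 2 * f x * f y) :
    ∃ lam : ℂ, lam ≠ 0 ∧ ∀ x : S, f (σ x) + f (τ x) = lam * f x := by
  have hc := apply_mul_comm_of_functional_equation hσmul hτmul heq hf
  obtain ⟨lam, hlam⟩ :=
    exists_eq_const_mul_of_mul_comm hf (apply_sigma_add_apply_tau_mul_comm heq hc)
  refine ⟨lam, fun h₀ => hf ?_, hlam⟩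
  refine eq_zero_of_apply_sigma_add_apply_tau_eq_zero hσmul hσinv hτmul hτinv heq hc fun x => ?_
  rw [hlam, h₀, zero_mul]
end

section
/- Let f : S → ℂ be a non-zero solution of the functional equation f(xσ(y)) + f(τ(y)x) = 2f(x)f(y) for all x, y ∈ S. Then f is a solution of the pre-d'Alembert functional equation: f(axy) + f(ayx) = 2f(a)f(xy) + 2f(x)f(ay) + 2f(ax)f(y) − 4f(a)f(x)f(y) for all a, x, y ∈ S. -/
/-!
Evaluating the equation at shifted arguments and cancelling a value `f u₀ ≠ 0` shows that `f` is
central, `f (y * z) = f (z * y)`, and that `f ∘ σ + f ∘ τ = k • f` for a constant `k`. Then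
`P := 2 f ∘ σ - k f` is an `f`-derivation, `P (u v) = P u f v + f u P v`, with
`P u P v = k (k - 2) f u f v`; hence `P = μ f` with `μ² = k (k - 2)`. Since `σ` is involutive,
`(k + μ)² = 4`. If `μ ≠ 0`, the derivation rule gives `f (u v) = 2 f u f v`, which forces `k = 1`,
incompatible with `μ² = -1` and `(1 + μ)² = 4`. So `μ = 0`, `k = 2` and `f ∘ σ = f`, after which
the pre-d'Alembert equation is a linear combination of instances of the original one.
-/

section Proportional

variable {α K : Type*} [Field K] {f g : α → K}

theorem exists_forall_eq_mul_of_mul_eq_mul (hf : f ≠ 0) (h : ∀ u v, g u * f v = f u * g v) :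
    ∃ k, ∀ v, g v = k * f v := by
  obtain ⟨u₀, hu₀⟩ : ∃ u, f u ≠ 0 := Function.ne_iff.mp hf
  refine ⟨g u₀ / f u₀, fun v => ?_⟩
  rw [div_mul_eq_mul_div, eq_div_iff hu₀]
  linear_combination -h u₀ v

theorem exists_sq_eq_forall_eq_mul_of_mul_eq {c : K} (hf : f ≠ 0)
    (h : ∀ u v, g u * g v = c * (f u * f v)) : ∃ μ, μ ^ 2 = c ∧ ∀ v, g v = μ * f v := by
  obtain ⟨u₀, hu₀⟩ : ∃ u, f u ≠ 0 := Function.ne_iff.mp hf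
  obtain ⟨μ, hgu₀⟩ : ∃ μ, g u₀ = μ * f u₀ := ⟨g u₀ / f u₀, (div_mul_cancel₀ _ hu₀).symm⟩
  have hμ : μ ^ 2 = c := by
    refine mul_right_cancel₀ (pow_ne_zero 2 hu₀) ?_
    linear_combination -(g u₀ + μ * f u₀) * hgu₀ + h u₀ u₀
  refine ⟨μ, hμ, fun v => ?_⟩
  by_cases hμ0 : μ = 0
  · subst hμ0
    have hgv : g v ^ 2 = 0 := by linear_combination h v v - f v * f v * hμ
    simpa using hgv
  · refine mul_left_cancel₀ (mul_ne_zero hμ0 hu₀) ?_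
    linear_combination h u₀ v - g v * hgu₀ - f u₀ * f v * hμ

end Proportional

section Twisted

def twist {S : Type*} (σ : S → S) (f : S → ℂ) (k : ℂ) (u : S) : ℂ := 2 * f (σ u) - k * f u

variable {S : Type*} {σ τ : S → S} {f : S → ℂ} {k : ℂ}

theorem twist_τ_eq_neg (hk : ∀ v, f (σ v) + f (τ v) = k * f v) (u : S) :
    twist τ f k u = -twist σ f k u := by
  simp only [twist]
  linear_combination 2 * hk u

variable [Semigroup S]

theorem map_mul_σ_mul_σ_add_swap (hσmul : ∀ x y, σ (x * y) = σ x * σ y)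
    (hτmul : ∀ x y, τ (x * y) = τ y * τ x)
    (heq : ∀ x y, f (x * σ y) + f (τ y * x) = 2 * f x * f y) (x y z : S) :
    f (x * σ y * σ z) + f (x * σ z * σ y) =
      2 * f (x * σ y) * f z - 2 * f (τ z * x) * f y + 2 * f x * f (z * y) := by
  have e1 := heq (x * σ y) z
  have e2 := heq (τ z * x) y
  have e3 := heq x (z * y)
  rw [hσmul, hτmul] at e3
  simp only [mul_assoc] at e1 e2 e3 ⊢
  linear_combination e1 - e2 + e3

theorem map_mul_comm (hσmul : ∀ x y, σ (x * y) = σ x * σ y)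
    (hτmul : ∀ x y, τ (x * y) = τ y * τ x)
    (heq : ∀ x y, f (x * σ y) + f (τ y * x) = 2 * f x * f y) (hf : f ≠ 0) (y z : S) :
    f (y * z) = f (z * y) := by
  obtain ⟨u₀, hu₀⟩ : ∃ u, f u ≠ 0 := Function.ne_iff.mp hf
  refine mul_left_cancel₀ (mul_ne_zero two_ne_zero hu₀) ?_
  linear_combination map_mul_σ_mul_σ_add_swap hσmul hτmul heq u₀ y z -
    map_mul_σ_mul_σ_add_swap hσmul hτmul heq u₀ z y + 2 * f z * heq u₀ y - 2 * f y * heq u₀ z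

theorem exists_map_σ_add_map_τ_eq_mul (heq : ∀ x y, f (x * σ y) + f (τ y * x) = 2 * f x * f y)
    (hcomm : ∀ y z, f (y * z) = f (z * y)) (hf : f ≠ 0) :
    ∃ k, ∀ v, f (σ v) + f (τ v) = k * f v := by
  have hsub : ∀ u v, f (σ u * σ v) - f (τ v * τ u) = 2 * f (σ u) * f v - 2 * f u * f (τ v) :=
    fun u v => by linear_combination heq (σ u) v - heq (τ v) u + hcomm (τ u) (τ v)
  refine exists_forall_eq_mul_of_mul_eq_mul (g := fun v => f (σ v) + f (τ v)) hf fun u v => ?_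
  linear_combination (hcomm (σ u) (σ v) + hcomm (τ u) (τ v) - hsub u v + hsub v u) / 2

theorem twist_mul (hσmul : ∀ x y, σ (x * y) = σ x * σ y) (hτmul : ∀ x y, τ (x * y) = τ y * τ x)
    (heq : ∀ x y, f (x * σ y) + f (τ y * x) = 2 * f x * f y)
    (hcomm : ∀ y z, f (y * z) = f (z * y)) (hk : ∀ v, f (σ v) + f (τ v) = k * f v) (u v : S) :
    twist σ f k (u * v) = twist σ f k u * f v + f u * twist σ f k v := by
  have hkuv := hk (u * v)
  rw [hσmul, hτmul] at hkuv
  simp only [twist, hσmul]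
  linear_combination heq (σ u) v - heq (τ v) u + hcomm (τ u) (τ v) + hkuv - 2 * f u * hk v

theorem twist_mul_twist (hσmul : ∀ x y, σ (x * y) = σ x * σ y) (hσinv : ∀ x, σ (σ x) = x)
    (hτmul : ∀ x y, τ (x * y) = τ y * τ x) (hτinv : ∀ x, τ (τ x) = x)
    (heq : ∀ x y, f (x * σ y) + f (τ y * x) = 2 * f x * f y)
    (hcomm : ∀ y z, f (y * z) = f (z * y)) (hk : ∀ v, f (σ v) + f (τ v) = k * f v) (u v : S) :
    twist σ f k u * twist σ f k v = k * (k - 2) * (f u * f v) := by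
  have hσ := twist_mul hσmul hτmul heq hcomm hk u (σ v)
  have hτ : twist τ f k (u * τ v) = twist τ f k u * f (τ v) + f u * twist τ f k (τ v) := by
    simp only [twist_τ_eq_neg hk]
    linear_combination -twist_mul hσmul hτmul heq hcomm hk u (τ v)
  simp only [twist, hσmul, hσinv] at hσ
  simp only [twist, hτmul, hτinv] at hτ
  simp only [twist]
  linear_combination -hσ - hτ - k * heq u v + 2 * heq v u + 2 * hcomm (σ u) v +
    2 * hcomm v (τ u) + k * hcomm (τ v) u - 2 * f (τ v) * hk u + 2 * f (σ u) * hk v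

theorem eq_one_of_map_mul_eq_two_mul (heq : ∀ x y, f (x * σ y) + f (τ y * x) = 2 * f x * f y)
    (hf : f ≠ 0) (hk : ∀ v, f (σ v) + f (τ v) = k * f v)
    (hmul : ∀ u v, f (u * v) = 2 * f u * f v) : k = 1 := by
  obtain ⟨u₀, hu₀⟩ : ∃ u, f u ≠ 0 := Function.ne_iff.mp hf
  refine mul_right_cancel₀ (mul_ne_zero hu₀ hu₀) ?_
  linear_combination (heq u₀ u₀ - hmul u₀ (σ u₀) - hmul (τ u₀) u₀) / 2 - f u₀ * hk u₀

theorem map_σ_eq (hσmul : ∀ x y, σ (x * y) = σ x * σ y) (hσinv : ∀ x, σ (σ x) = x)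
    (hτmul : ∀ x y, τ (x * y) = τ y * τ x) (hτinv : ∀ x, τ (τ x) = x)
    (heq : ∀ x y, f (x * σ y) + f (τ y * x) = 2 * f x * f y) (hf : f ≠ 0) (v : S) :
    f (σ v) = f v := by
  have hcomm := map_mul_comm hσmul hτmul heq hf
  obtain ⟨k, hk⟩ := exists_map_σ_add_map_τ_eq_mul heq hcomm hf
  obtain ⟨μ, hμ, hP⟩ := exists_sq_eq_forall_eq_mul_of_mul_eq hf
    (twist_mul_twist hσmul hσinv hτmul hτinv heq hcomm hk)
  obtain ⟨u₀, hu₀⟩ : ∃ u, f u ≠ 0 := Function.ne_iff.mp hf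
  have hkμ : (k + μ) ^ 2 = 4 := by
    have h₁ := hP u₀
    have h₂ := hP (σ u₀)
    simp only [twist, hσinv] at h₁ h₂
    refine mul_right_cancel₀ hu₀ ?_
    linear_combination -(k + μ) * h₁ - 2 * h₂
  have hμ0 : μ = 0 := by
    by_contra hμne
    have hmul : ∀ u v, f (u * v) = 2 * f u * f v := fun u v => by
      have h := twist_mul hσmul hτmul heq hcomm hk u v
      rw [hP, hP, hP] at h
      exact mul_left_cancel₀ hμne (by linear_combination h)
    obtain rfl := eq_one_of_map_mul_eq_two_mul heq hf hk hmul
    have : (5 : ℂ) = 0 := by linear_combination hμ - (μ + 2) * (hkμ - hμ) / 2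
    norm_num at this
  subst hμ0
  have hk2 : k = 2 := by linear_combination (hkμ + hμ) / 2
  have h := hP v
  simp only [twist, hk2] at h
  linear_combination h / 2

end Twisted

theorem stmt4 {S : Type*} [Semigroup S] (σ τ : S → S)
    (hσmul : ∀ x y : S, σ (x * y) = σ x * σ y) (hσinv : ∀ x : S, σ (σ x) = x)
    (hτmul : ∀ x y : S, τ (x * y) = τ y * τ x) (hτinv : ∀ x : S, τ (τ x) = x)
    (f : S → ℂ) (hf : f ≠ 0)
    (heq : ∀ x y : S, f (x * σ y) + f (τ y * x) = 2 * f x * f y) :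
    ∀ a x y : S,
      f (a * x * y) + f (a * y * x) =
        2 * f a * f (x * y) + 2 * f x * f (a * y) + 2 * f (a * x) * f y -
          4 * f a * f x * f y := by
  intro a x y
  have hfσ := map_σ_eq hσmul hσinv hτmul hτinv heq hf
  have h := map_mul_σ_mul_σ_add_swap hσmul hτmul heq a (σ x) (σ y)
  have e := heq a (σ y)
  simp only [hσinv, ← hσmul, hfσ] at h e
  linear_combination h - 2 * f x * e + 2 * f a * map_mul_comm hσmul hτmul heq hf y x
end

section
/- Let χ : M → ℂ be a multiplicative function (χ(xy) = χ(x)χ(y) for all x, y ∈ M) such that χ∘σ∘τ = χ∘τ∘σ and such that χ∘σ = χ or χ∘τ = χ. Then the function f = (χ + χ∘σ∘τ)/2 is an abelian solution of the functional equation f(xσ(y)) + f(τ(y)x) = 2f(x)f(y) for all x, y ∈ M. -/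
/-!
Put `ψ = χ ∘ σ ∘ τ`. Since `σ ∘ τ` is an anti-automorphism and `ℂ` is commutative, `ψ` is
multiplicative like `χ`, and a multiplicative function is abelian; hence so is `f = (χ + ψ) / 2`.
Expanding both sides of the functional equation with multiplicativity, it reduces to the identity
`χ (σ y) + χ (τ y) = χ y + ψ y`, which holds when `χ` is `σ`-even and, using `χ ∘ σ ∘ τ = χ ∘ τ ∘ σ`,
also when `χ` is `τ`-even.
-/

/-- A function `f : M → ℂ` on a monoid is abelian if
`f(x₁x₂⋯xₙ) = f(x_{ε(1)}x_{ε(2)}⋯x_{ε(n)})` for every `n ≥ 2`, all `x₁, …, xₙ ∈ M`,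
and every permutation `ε` of `{1, …, n}`. -/
def IsAbelianFn {M : Type*} [Monoid M] (f : M → ℂ) : Prop :=
  ∀ n : ℕ, 2 ≤ n → ∀ (x : Fin n → M) (ε : Equiv.Perm (Fin n)),
    f (List.ofFn x).prod = f (List.ofFn (x ∘ ε)).prod

theorem List.prod_map_of_map_mul {M N : Type*} [Monoid M] [Monoid N] {g : M → N}
    (hg : ∀ x y, g (x * y) = g x * g y) {l : List M} (hl : l ≠ []) :
    g l.prod = (l.map g).prod := by
  induction l with
  | nil => exact absurd rfl hl
  | cons a t ih =>
    rcases eq_or_ne t [] with rfl | ht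
    · simp
    · simp [hg, ih ht]

section Abelian

variable {M : Type*} [Monoid M]

theorem isAbelianFn_of_map_mul {g : M → ℂ} (hg : ∀ x y, g (x * y) = g x * g y) :
    IsAbelianFn g := by
  intro n hn x ε
  have hne : ∀ y : Fin n → M, List.ofFn y ≠ [] := fun y => by
    rw [Ne, List.ofFn_eq_nil_iff]
    omega
  rw [List.prod_map_of_map_mul hg (hne x), List.prod_map_of_map_mul hg (hne (x ∘ ε)),
    List.map_ofFn, List.map_ofFn, List.prod_ofFn, List.prod_ofFn]
  exact (Equiv.prod_comp ε (g ∘ x)).symm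

theorem IsAbelianFn.comp₂ {g h : M → ℂ} (hg : IsAbelianFn g) (hh : IsAbelianFn h)
    (Φ : ℂ → ℂ → ℂ) : IsAbelianFn fun x => Φ (g x) (h x) := by
  intro n hn x ε
  simp only [hg n hn x ε, hh n hn x ε]

end Abelian

theorem map_mul_comp_of_anti {M N : Type*} [Mul M] [CommMagma N] {α : M → M} {χ : M → N}
    (hα : ∀ x y, α (x * y) = α y * α x) (hχ : ∀ x y, χ (x * y) = χ x * χ y) (x y : M) :
    χ (α (x * y)) = χ (α x) * χ (α y) := by
  rw [hα, hχ, mul_comm]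

theorem add_map_eq_add_map_comp {M N : Type*} [AddCommMonoid N] {σ τ : M → M} {χ : M → N}
    (hcomm : ∀ x, χ (σ (τ x)) = χ (τ (σ x)))
    (heven : (∀ x, χ (σ x) = χ x) ∨ (∀ x, χ (τ x) = χ x)) (y : M) :
    χ (σ y) + χ (τ y) = χ y + χ (σ (τ y)) := by
  rcases heven with hσ | hτ
  · rw [hσ, hσ (τ y)]
  · rw [hτ, hcomm, hτ, add_comm]

theorem stmt6 {M : Type*} [Monoid M] (σ τ : M → M)
    (hσmul : ∀ x y : M, σ (x * y) = σ x * σ y) (hσinv : ∀ x : M, σ (σ x) = x)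
    (hτmul : ∀ x y : M, τ (x * y) = τ y * τ x) (hτinv : ∀ x : M, τ (τ x) = x)
    (χ : M → ℂ) (hχmul : ∀ x y : M, χ (x * y) = χ x * χ y)
    (hcomm : ∀ x : M, χ (σ (τ x)) = χ (τ (σ x)))
    (heven : (∀ x : M, χ (σ x) = χ x) ∨ (∀ x : M, χ (τ x) = χ x))
    (f : M → ℂ) (hfdef : ∀ x : M, f x = (χ x + χ (σ (τ x))) / 2) :
    IsAbelianFn f ∧ ∀ x y : M, f (x * σ y) + f (τ y * x) = 2 * f x * f y := by
  have hψmul := map_mul_comp_of_anti (α := fun x => σ (τ x))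
    (fun x y => by rw [hτmul, hσmul]) hχmul
  have key := add_map_eq_add_map_comp hcomm heven
  obtain rfl : f = fun x => (χ x + χ (σ (τ x))) / 2 := funext hfdef
  refine ⟨(isAbelianFn_of_map_mul hχmul).comp₂ (isAbelianFn_of_map_mul hψmul) fun a b => (a + b) / 2,
    fun x y => ?_⟩
  -- `ψ (σ y) = χ (τ y)` and `ψ (τ y) = χ (σ y)`, so both coefficients reduce to `key y`
  have hψσ : χ (σ (τ (σ y))) = χ (τ y) := by rw [hcomm, hσinv]
  have hψτ : χ (σ (τ (τ y))) = χ (σ y) := by rw [hτinv]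
  simp only [hχmul, hψmul, hψσ, hψτ]
  linear_combination (χ x + χ (σ (τ x))) / 2 * key y
end

section
/- Let f : G → ℂ be a non-zero solution of the functional equation f(y⁻¹xz₀) − f(xσ(y)z₀) = 2f(x)f(y) for all x, y ∈ G. Then (1) f(e) = 0; (2) f(y⁻¹z₀) = f(σ(y)z₀) for all y ∈ G; and (3) f(y⁻¹) = −f(σ(y)) for all y ∈ G. -/
/-!
Substituting `y = 1` and then `x = 1` gives (1) and (2). For (3), write `a = f x` and
`b = f (σ x)⁻¹`: the four instances `(x, x)`, `(x, (σ x)⁻¹)`, `((σ x)⁻¹, x)`,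
`((σ x)⁻¹, (σ x)⁻¹)` of the equation, after using (2) to rewrite the arguments
`x⁻¹ (σ x)⁻¹ z₀` and `(σ x)⁻¹ x⁻¹ z₀`, telescope to `0 = 2 (a + b)²`.
-/

def IsVanVleckSolution {G R : Type*} [Group G] [CommRing R] (σ : G →* G) (z₀ : G)
    (f : G → R) : Prop :=
  ∀ x y : G, f (y⁻¹ * x * z₀) - f (x * σ y * z₀) = 2 * f x * f y

namespace IsVanVleckSolution

variable {G R : Type*} [Group G] [CommRing R] {σ : G →* G} {z₀ : G} {f : G → R}

theorem apply_one [NoZeroDivisors R] [NeZero (2 : R)] (hsol : IsVanVleckSolution σ z₀ f)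
    (hf : f ≠ 0) : f 1 = 0 := by
  obtain ⟨x, hx⟩ := Function.ne_iff.mp hf
  have h := hsol x 1
  rw [map_one, inv_one, one_mul, mul_one, sub_self, eq_comm, mul_eq_zero, mul_eq_zero] at h
  exact h.resolve_left (not_or.mpr ⟨two_ne_zero, hx⟩)

theorem apply_inv_mul (hsol : IsVanVleckSolution σ z₀ f) (h1 : f 1 = 0) (y : G) :
    f (y⁻¹ * z₀) = f (σ y * z₀) := by
  have h := hsol 1 y
  rw [mul_one, one_mul, h1, mul_zero, zero_mul] at h
  exact sub_eq_zero.mp h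

theorem add_apply_inv_map_eq_zero [NoZeroDivisors R] [NeZero (2 : R)]
    (hsol : IsVanVleckSolution σ z₀ f) (hσ : ∀ x, σ (σ x) = x) (h1 : f 1 = 0) (x : G) :
    f x + f (σ x)⁻¹ = 0 := by
  have hxx := hsol x x
  have hxs := hsol x (σ x)⁻¹
  have hsx := hsol (σ x)⁻¹ x
  have hss := hsol (σ x)⁻¹ (σ x)⁻¹
  simp only [map_inv, hσ, inv_inv, mul_inv_cancel, inv_mul_cancel, one_mul] at hxx hxs hsx hss
  have hb₁ := hsol.apply_inv_mul h1 (σ x * x)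
  have hb₂ := hsol.apply_inv_mul h1 (x * σ x)
  rw [map_mul, hσ, mul_inv_rev] at hb₁ hb₂
  have hsq : 2 * (f x + f (σ x)⁻¹) ^ 2 = 0 := by
    linear_combination -hxx - hxs - hsx - hss + hb₁ - hb₂
  exact pow_eq_zero_iff two_ne_zero |>.mp ((mul_eq_zero.mp hsq).resolve_left two_ne_zero)

theorem apply_inv [NoZeroDivisors R] [NeZero (2 : R)] (hsol : IsVanVleckSolution σ z₀ f)
    (hσ : ∀ x, σ (σ x) = x) (h1 : f 1 = 0) (y : G) :
    f y⁻¹ = -f (σ y) := by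
  have h := hsol.add_apply_inv_map_eq_zero hσ h1 (σ y)
  rw [hσ] at h
  exact eq_neg_of_add_eq_zero_right h

end IsVanVleckSolution

theorem stmt12_general {G : Type*} [Group G] (σ : G → G)
    (hσmul : ∀ x y : G, σ (x * y) = σ x * σ y) (hσinv : ∀ x : G, σ (σ x) = x)
    (z₀ : G)
    (f : G → ℂ) (hf : f ≠ 0)
    (heq : ∀ x y : G, f (y⁻¹ * x * z₀) - f (x * σ y * z₀) = 2 * f x * f y) :
    f 1 = 0 ∧ (∀ y : G, f (y⁻¹ * z₀) = f (σ y * z₀)) ∧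
      (∀ y : G, f y⁻¹ = - f (σ y)) := by
  have hsol : IsVanVleckSolution (MonoidHom.mk' σ hσmul) z₀ f := heq
  have h1 := hsol.apply_one hf
  exact ⟨h1, hsol.apply_inv_mul h1, hsol.apply_inv hσinv h1⟩

theorem stmt12 {G : Type*} [Group G] (σ : G → G)
    (hσmul : ∀ x y : G, σ (x * y) = σ x * σ y) (hσinv : ∀ x : G, σ (σ x) = x)
    (z₀ : G) (hz₀ : z₀ ∈ Subgroup.center G)
    (f : G → ℂ) (hf : f ≠ 0)
    (heq : ∀ x y : G, f (y⁻¹ * x * z₀) - f (x * σ y * z₀) = 2 * f x * f y) :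
    f 1 = 0 ∧ (∀ y : G, f (y⁻¹ * z₀) = f (σ y * z₀)) ∧
      (∀ y : G, f y⁻¹ = - f (σ y)) :=
  stmt12_general σ hσmul hσinv z₀ f hf heq
end

section
/- Let f : G → ℂ be a non-zero solution of the functional equation f(y⁻¹xz₀) − f(xσ(y)z₀) = 2f(x)f(y) for all x, y ∈ G. Then (1) f(yσ(z₀)z₀) = −f(y) for all y ∈ G; (2) f(σ(z₀)z₀) = 0; (3) f(z₀) = 1; and (4) f(z₀²) = 0. -/
/-!
Putting `y = 1` gives `f 1 = 0`, and `y = z₀` gives `f (x σ(z₀) z₀) = (1 - 2 f(z₀)) f(x)`.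
Using `y = σ(z₀) z₀` as well shows `(1 - 2 f(z₀))² = 1`, so `f(z₀)` is `0` or `1`.
If `f(z₀) = 0`, comparing the equation at `(x z₀, y)` and `(x, y σ(z₀))` shows
`f(x z₀) = c f(x)` for a constant `c ≠ 0`. Then `f ∘ σ = f ∘ inv`, and the rescaled equation
at `(y, y)` and `((σ y)⁻¹, y)` adds up to `4 f(y)² = 0`, contradicting `f ≠ 0`.
So `f(z₀) = 1`, and the four identities follow from the formulas above.
-/

def VanVleckEq {G : Type*} [Group G] (σ : G ≃* G) (z₀ : G) (f : G → ℂ) : Prop :=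
  ∀ x y : G, f (y⁻¹ * x * z₀) - f (x * σ y * z₀) = 2 * f x * f y

theorem eq_zero_of_forall_mul_sub_eq {G : Type*} [Group G] {σ : G →* G}
    (hσ : Function.Involutive σ) {f : G → ℂ} {c : ℂ} (hfσ : ∀ y, f (σ y) = f y⁻¹)
    (h : ∀ x y, c * (f (y⁻¹ * x) - f (x * σ y)) = 2 * f x * f y) : f = 0 := by
  funext y
  have h_inv_σ : f (σ y)⁻¹ = f y := by rw [← map_inv, hfσ, inv_inv]
  have h_mul_σ : f (y⁻¹ * (σ y)⁻¹) = f (y * σ y) := by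
    rw [← mul_inv_rev, ← hfσ, map_mul, hσ]
  have h₁ := h y y
  have h₂ := h (σ y)⁻¹ y
  rw [h_inv_σ, h_mul_σ, inv_mul_cancel] at h₂
  rw [inv_mul_cancel] at h₁
  have : f y ^ 2 = 0 := by linear_combination -(h₁ + h₂) / 4
  exact pow_eq_zero_iff two_ne_zero |>.mp this

theorem inv_mul_mul_eq_of_mem_center {G : Type*} [Group G] {z : G}
    (hz : z ∈ Subgroup.center G) (w : G) : z⁻¹ * w * z = w := by
  rw [mul_assoc, Subgroup.mem_center_iff.mp hz w, inv_mul_cancel_left]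

namespace VanVleckEq

variable {G : Type*} [Group G] {σ : G ≃* G} {z₀ : G} {f : G → ℂ}

theorem apply_one_eq_zero (h : VanVleckEq σ z₀ f) (hf : f ≠ 0) : f 1 = 0 := by
  obtain ⟨x, hx⟩ := Function.ne_iff.mp hf
  have := h x 1
  rw [inv_one, one_mul, map_one, mul_one, sub_self] at this
  exact (mul_eq_zero.mp this.symm).resolve_left (by simpa using hx)

theorem apply_inv_mul_eq (h : VanVleckEq σ z₀ f) (h₁ : f 1 = 0) (y : G) :
    f (y⁻¹ * z₀) = f (σ y * z₀) := by
  simpa [h₁, sub_eq_zero] using h 1 y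

theorem apply_mul_mul_eq (h : VanVleckEq σ z₀ f) (hz : z₀ ∈ Subgroup.center G) (x : G) :
    f (x * σ z₀ * z₀) = (1 - 2 * f z₀) * f x := by
  have := h x z₀
  rw [inv_mul_mul_eq_of_mem_center hz] at this
  linear_combination -this

theorem apply_mul_mul_self_eq_zero (h : VanVleckEq σ z₀ f) (hz : z₀ ∈ Subgroup.center G)
    (h₁ : f 1 = 0) : f (σ z₀ * z₀) = 0 := by
  simpa [h₁] using h.apply_mul_mul_eq hz 1

theorem apply_mul_inv_eq (h : VanVleckEq σ z₀ f) (hσ : Function.Involutive σ)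
    (hz : z₀ ∈ Subgroup.center G) (h₁ : f 1 = 0) (u : G) :
    f (u * (σ z₀)⁻¹) = (1 - 2 * f z₀) * f (u * z₀) := by
  have hσz : σ z₀ ∈ Subgroup.center G := MulEquivClass.apply_mem_center σ hz
  have := h u (σ z₀ * z₀)
  rw [h.apply_mul_mul_self_eq_zero hz h₁, mul_zero, map_mul, hσ, ← mul_assoc,
    h.apply_mul_mul_eq hz, mul_inv_rev, mul_assoc z₀⁻¹, inv_mul_mul_eq_of_mem_center hz,
    ← Subgroup.mem_center_iff.mp (Subgroup.inv_mem _ hσz)] at this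
  linear_combination this

theorem one_sub_two_mul_apply_center_sq_eq_one (h : VanVleckEq σ z₀ f)
    (hσ : Function.Involutive σ) (hz : z₀ ∈ Subgroup.center G) (hf : f ≠ 0) :
    (1 - 2 * f z₀) ^ 2 = 1 := by
  obtain ⟨x, hx⟩ := Function.ne_iff.mp hf
  have := h.apply_mul_inv_eq hσ hz (h.apply_one_eq_zero hf) (x * σ z₀)
  rw [mul_inv_cancel_right, h.apply_mul_mul_eq hz] at this
  exact mul_right_cancel₀ (b := f x) hx (by linear_combination -this)

theorem apply_mul_mul_eq_mul_apply_mul (h : VanVleckEq σ z₀ f) (hσ : Function.Involutive σ)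
    (hz : z₀ ∈ Subgroup.center G) (h₁ : f 1 = 0) (h₀ : f z₀ = 0) (x y : G) :
    f (x * z₀) * f y = f x * f (y * σ z₀) := by
  have hσz : σ z₀ ∈ Subgroup.center G := MulEquivClass.apply_mem_center σ hz
  have e₁ : y⁻¹ * (x * z₀) * z₀ = y⁻¹ * x * z₀ * z₀ := by rw [← mul_assoc]
  have e₂ : x * z₀ * σ y * z₀ = x * σ y * z₀ * z₀ := by
    rw [mul_assoc x z₀, ← Subgroup.mem_center_iff.mp hz (σ y), ← mul_assoc]
  have e₃ : (y * σ z₀)⁻¹ * x * z₀ = y⁻¹ * x * z₀ * (σ z₀)⁻¹ := by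
    rw [mul_inv_rev, mul_assoc _ y⁻¹, mul_assoc, mul_assoc,
      Subgroup.mem_center_iff.mp (Subgroup.inv_mem _ hσz), ← mul_assoc, ← mul_assoc]
  have e₄ : x * σ (y * σ z₀) * z₀ = x * σ y * z₀ * z₀ := by rw [map_mul, hσ, ← mul_assoc]
  have h₂ := h (x * z₀) y
  have h₃ := h x (y * σ z₀)
  rw [e₁, e₂] at h₂
  rw [e₃, e₄, h.apply_mul_inv_eq hσ hz h₁, h₀] at h₃
  linear_combination (h₃ - h₂) / 2

theorem exists_apply_mul_center_eq_mul (h : VanVleckEq σ z₀ f) (hσ : Function.Involutive σ)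
    (hz : z₀ ∈ Subgroup.center G) (hf : f ≠ 0) (h₀ : f z₀ = 0) :
    ∃ c ≠ 0, ∀ x, f (x * z₀) = c * f x := by
  obtain ⟨x₀, hx₀⟩ := Function.ne_iff.mp hf
  have hmul := h.apply_mul_mul_eq_mul_apply_mul hσ hz (h.apply_one_eq_zero hf) h₀
  have hc : ∀ x, f (x * z₀) = f (x₀ * σ z₀) / f x₀ * f x := fun x => by
    rw [div_mul_eq_mul_div, eq_div_iff hx₀, hmul, mul_comm]
  refine ⟨_, fun hc₀ => hx₀ ?_, hc⟩
  have := h.apply_mul_mul_eq hz x₀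
  rwa [hc, hc₀, zero_mul, h₀, mul_zero, sub_zero, one_mul, eq_comm] at this

theorem apply_center_ne_zero (h : VanVleckEq σ z₀ f) (hσ : Function.Involutive σ)
    (hz : z₀ ∈ Subgroup.center G) (hf : f ≠ 0) : f z₀ ≠ 0 := by
  intro h₀
  obtain ⟨c, hc₀, hc⟩ := h.exists_apply_mul_center_eq_mul hσ hz hf h₀
  have hfσ : ∀ y, f (σ y) = f y⁻¹ := fun y => by
    have := h.apply_inv_mul_eq (h.apply_one_eq_zero hf) y
    rw [hc, hc] at this
    exact (mul_left_cancel₀ hc₀ this).symm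
  refine hf (eq_zero_of_forall_mul_sub_eq (σ := σ.toMonoidHom) (c := c) hσ hfσ fun x y => ?_)
  rw [MulEquiv.coe_toMonoidHom, ← h x y, hc, hc, mul_sub]

theorem apply_center_eq_one (h : VanVleckEq σ z₀ f) (hσ : Function.Involutive σ)
    (hz : z₀ ∈ Subgroup.center G) (hf : f ≠ 0) : f z₀ = 1 := by
  have hsq := h.one_sub_two_mul_apply_center_sq_eq_one hσ hz hf
  have : f z₀ * (f z₀ - 1) = 0 := by linear_combination hsq / 4
  exact sub_eq_zero.mp <| (mul_eq_zero.mp this).resolve_left (h.apply_center_ne_zero hσ hz hf)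

theorem apply_center_mul_apply_sq_eq_zero (h : VanVleckEq σ z₀ f)
    (hσ : Function.Involutive σ) (hz : z₀ ∈ Subgroup.center G) (h₁ : f 1 = 0) :
    f z₀ * f (z₀ ^ 2) = 0 := by
  have := h.apply_inv_mul_eq h₁ z₀⁻¹
  rw [inv_inv, map_inv, Subgroup.mem_center_iff.mp hz (σ z₀)⁻¹, h.apply_mul_inv_eq hσ hz h₁,
    ← pow_two] at this
  linear_combination this / 2

end VanVleckEq

theorem stmt13 {G : Type*} [Group G] (σ : G → G)
    (hσmul : ∀ x y : G, σ (x * y) = σ x * σ y) (hσinv : ∀ x : G, σ (σ x) = x)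
    (z₀ : G) (hz₀ : z₀ ∈ Subgroup.center G)
    (f : G → ℂ) (hf : f ≠ 0)
    (heq : ∀ x y : G, f (y⁻¹ * x * z₀) - f (x * σ y * z₀) = 2 * f x * f y) :
    (∀ y : G, f (y * σ z₀ * z₀) = - f y) ∧ f (σ z₀ * z₀) = 0 ∧
      f z₀ = 1 ∧ f (z₀ ^ 2) = 0 := by
  let τ : G ≃* G := ⟨Function.Involutive.toPerm σ hσinv, hσmul⟩
  have h : VanVleckEq τ z₀ f := heq
  have hτ : Function.Involutive τ := hσinv
  have h₁ : f 1 = 0 := h.apply_one_eq_zero hf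
  have h₂ : f z₀ = 1 := h.apply_center_eq_one hτ hz₀ hf
  refine ⟨fun y => ?_, h.apply_mul_mul_self_eq_zero hz₀ h₁, h₂, ?_⟩
  · have hD : f (y * σ z₀ * z₀) = (1 - 2 * f z₀) * f y := h.apply_mul_mul_eq hz₀ y
    linear_combination hD - 2 * f y * h₂
  · simpa [h₂] using h.apply_center_mul_apply_sq_eq_zero hτ hz₀ h₁
end

section
/- Let f : G → ℂ be a non-zero solution of the functional equation f(y⁻¹xz₀) − f(xσ(y)z₀) = 2f(x)f(y) for all x, y ∈ G. Then f(z₀⁻¹)² = f(σ(z₀))² = 1. -/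
/-!
Putting `y = 1` forces `f 1 = 0`, and then `x = z₀⁻¹` (using that `z₀` is central) gives
`f y⁻¹ - f (σ y) = 2 c f y` with `c = f z₀⁻¹`. Feeding this identity its own instances at
`σ y` and `y⁻¹` yields `c (f (σ y) + f y⁻¹) = 0`. The case `c = 0` is impossible: then
`f y⁻¹ = f (σ y)`, and comparing the equation at `(y⁻¹, y)`, `(σ y, y)`, `(y, y)`,
`(y⁻¹, y⁻¹)` shows `f y f y⁻¹ = 0` and `f y⁻¹ ^ 2 = f y ^ 2`, so `f = 0`. Hence
`f (σ y) = -f y⁻¹`, so `f y⁻¹ = c f y`; applying this twice gives `c ^ 2 = 1`, and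
`f (σ z₀) = -c`.
-/

namespace VanVleck

variable {G K : Type*} [Group G] [Field K]

def IsSolution (σ : G →* G) (z₀ : G) (f : G → K) : Prop :=
  ∀ x y : G, f (y⁻¹ * x * z₀) - f (x * σ y * z₀) = 2 * f x * f y

variable {σ : G →* G} {z₀ : G} {f : G → K}

theorem apply_one_eq_zero [NeZero (2 : K)] (h : IsSolution σ z₀ f) (hf : f ≠ 0) : f 1 = 0 := by
  obtain ⟨a, ha⟩ := Function.ne_iff.mp hf
  have ha₁ := h a 1
  simp only [inv_one, one_mul, map_one, mul_one, sub_self] at ha₁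
  exact (mul_eq_zero.mp ha₁.symm).resolve_left (mul_ne_zero two_ne_zero ha)

theorem apply_inv_mul_eq_apply_map_mul (h : IsSolution σ z₀ f) (h₁ : f 1 = 0) (y : G) :
    f (y⁻¹ * z₀) = f (σ y * z₀) := by
  simpa [h₁, sub_eq_zero] using h 1 y

theorem apply_inv_sub_apply_map (h : IsSolution σ z₀ f) (hz₀ : z₀ ∈ Subgroup.center G)
    (y : G) : f y⁻¹ - f (σ y) = 2 * f z₀⁻¹ * f y := by
  have hσy : z₀⁻¹ * σ y * z₀ = σ y := by
    rw [mul_assoc, Subgroup.mem_center_iff.mp hz₀, inv_mul_cancel_left]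
  simpa [hσy] using h z₀⁻¹ y

theorem apply_center_inv_mul_add_eq_zero [NeZero (2 : K)] (h : IsSolution σ z₀ f)
    (hσ : Function.Involutive σ) (hz₀ : z₀ ∈ Subgroup.center G) (y : G) :
    f z₀⁻¹ * (f (σ y) + f y⁻¹) = 0 := by
  have hσy := apply_inv_sub_apply_map h hz₀ (σ y)
  have hy := apply_inv_sub_apply_map h hz₀ y⁻¹
  rw [hσ y] at hσy
  rw [inv_inv, map_inv] at hy
  apply mul_left_cancel₀ (two_ne_zero : (2 : K) ≠ 0)
  linear_combination -hσy - hy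

theorem apply_mul_add_eq_zero [NeZero (2 : K)] (h : IsSolution σ z₀ f) (h₁ : f 1 = 0)
    (y : G) : f y * (f y⁻¹ + f (σ y)) = 0 := by
  have hy := h y⁻¹ y
  have hσy := h (σ y) y
  have hsq := apply_inv_mul_eq_apply_map_mul h h₁ (y * y)
  simp only [mul_inv_rev, map_mul, mul_assoc] at hy hσy hsq
  apply mul_left_cancel₀ (two_ne_zero : (2 : K) ≠ 0)
  linear_combination hsq - hy - hσy

theorem apply_inv_sq [NeZero (2 : K)] (h : IsSolution σ z₀ f) (hσ : Function.Involutive σ)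
    (h₁ : f 1 = 0) (y : G) : f y⁻¹ ^ 2 = f y ^ 2 := by
  have hy := h y y
  have hy' := h y⁻¹ y⁻¹
  have hsq := apply_inv_mul_eq_apply_map_mul h h₁ (σ y * y)
  simp only [inv_mul_cancel, one_mul, inv_inv, mul_inv_cancel, map_inv, mul_inv_rev, map_mul,
    hσ y, mul_assoc] at hy hy' hsq
  apply mul_left_cancel₀ (two_ne_zero : (2 : K) ≠ 0)
  linear_combination hy - hy' - hsq

theorem apply_center_inv_ne_zero [NeZero (2 : K)] (h : IsSolution σ z₀ f)
    (hσ : Function.Involutive σ) (hz₀ : z₀ ∈ Subgroup.center G) (hf : f ≠ 0) :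
    f z₀⁻¹ ≠ 0 := by
  intro hc
  have h₁ := apply_one_eq_zero h hf
  refine hf (funext fun y => ?_)
  have hσy : f (σ y) = f y⁻¹ := by
    have hy := apply_inv_sub_apply_map h hz₀ y
    rw [hc, mul_zero, zero_mul, sub_eq_zero] at hy
    exact hy.symm
  have hprod : f y * f y⁻¹ = 0 := by
    have := apply_mul_add_eq_zero h h₁ y
    rw [hσy, ← two_mul, mul_left_comm] at this
    exact (mul_eq_zero.mp this).resolve_left two_ne_zero
  have : f y ^ 4 = 0 := by
    linear_combination f y * f y⁻¹ * hprod - f y ^ 2 * apply_inv_sq h hσ h₁ y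
  exact pow_eq_zero_iff (n := 4) (by norm_num) |>.mp this

theorem apply_map_eq_neg_apply_inv [NeZero (2 : K)] (h : IsSolution σ z₀ f)
    (hσ : Function.Involutive σ) (hz₀ : z₀ ∈ Subgroup.center G) (hf : f ≠ 0) (y : G) :
    f (σ y) = -f y⁻¹ :=
  eq_neg_of_add_eq_zero_left <|
    (mul_eq_zero.mp (apply_center_inv_mul_add_eq_zero h hσ hz₀ y)).resolve_left
      (apply_center_inv_ne_zero h hσ hz₀ hf)

theorem apply_inv_eq_apply_center_inv_mul [NeZero (2 : K)] (h : IsSolution σ z₀ f)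
    (hσ : Function.Involutive σ) (hz₀ : z₀ ∈ Subgroup.center G) (hf : f ≠ 0) (y : G) :
    f y⁻¹ = f z₀⁻¹ * f y := by
  have hy := apply_inv_sub_apply_map h hz₀ y
  rw [apply_map_eq_neg_apply_inv h hσ hz₀ hf, sub_neg_eq_add, ← two_mul, mul_assoc] at hy
  exact mul_left_cancel₀ two_ne_zero hy

theorem apply_center_inv_sq [NeZero (2 : K)] (h : IsSolution σ z₀ f)
    (hσ : Function.Involutive σ) (hz₀ : z₀ ∈ Subgroup.center G) (hf : f ≠ 0) :
    f z₀⁻¹ ^ 2 = 1 := by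
  obtain ⟨a, ha⟩ := Function.ne_iff.mp hf
  have hinv := apply_inv_eq_apply_center_inv_mul h hσ hz₀ hf
  have haa : f a = f z₀⁻¹ ^ 2 * f a := by
    simpa only [inv_inv, hinv a, ← mul_assoc, ← sq] using hinv a⁻¹
  exact mul_right_cancel₀ ha (by rw [one_mul]; exact haa.symm)

end VanVleck

open VanVleck in
theorem stmt14 {G : Type*} [Group G] (σ : G → G)
    (hσmul : ∀ x y : G, σ (x * y) = σ x * σ y) (hσinv : ∀ x : G, σ (σ x) = x)
    (z₀ : G) (hz₀ : z₀ ∈ Subgroup.center G)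
    (f : G → ℂ) (hf : f ≠ 0)
    (heq : ∀ x y : G, f (y⁻¹ * x * z₀) - f (x * σ y * z₀) = 2 * f x * f y) :
    f z₀⁻¹ ^ 2 = 1 ∧ f (σ z₀) ^ 2 = 1 := by
  let σ' : G →* G := MonoidHom.mk' σ hσmul
  have h : IsSolution σ' z₀ f := heq
  have hσ : Function.Involutive σ' := hσinv
  refine ⟨apply_center_inv_sq h hσ hz₀ hf, ?_⟩
  rw [show σ z₀ = σ' z₀ from rfl, apply_map_eq_neg_apply_inv h hσ hz₀ hf, neg_sq]
  exact apply_center_inv_sq h hσ hz₀ hf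
end

section
/- Let f : G → ℂ be a non-zero solution of the functional equation f(y⁻¹xz₀) − f(xσ(y)z₀) = 2f(x)f(y) for all x, y ∈ G. Then f(z₀³) = f(z₀⁻¹) = −f(σ(z₀)). -/
/-!
Comparing the equation at `(x, y)` and at `((σ x)⁻¹, y)` shows that `f ((σ x)⁻¹) = -f x`,
which is the second identity for `x = σ z₀`. Putting `y = z₀` gives
`f (x * σ z₀ * z₀) = (1 - 2 f z₀) f x`, and from this `a = f z₀` satisfies `a² = a` and
`b = f z₀⁻¹` satisfies `b² = a`. If `a = 1`, two more instances give `f (z₀ ^ 3) = b`. If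
`a = 0`, then `f (x z₀) f (y z₀) = f x f y`; taking `f y ≠ 0`, the zeros of `f` are stable under
`x ↦ x z₀`, so `f` vanishes on all powers of `z₀` because `f 1 = 0`, and `b = 0` as well.
-/

section

variable {G : Type*} [Group G] {σ : G →* G} {z₀ : G} {f : G → ℂ}

def IsSolution (σ : G →* G) (z₀ : G) (f : G → ℂ) : Prop :=
  ∀ x y : G, f (y⁻¹ * x * z₀) - f (x * σ y * z₀) = 2 * f x * f y

namespace IsSolution

theorem apply_one (h : IsSolution σ z₀ f) (hf : f ≠ 0) : f 1 = 0 := by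
  obtain ⟨y, hy⟩ : ∃ y, f y ≠ 0 := Function.ne_iff.mp hf
  have := h y 1
  simp only [inv_one, one_mul, map_one, mul_one, sub_self] at this
  simpa [hy] using this.symm

theorem apply_inv_mul (h : IsSolution σ z₀ f) (hf : f ≠ 0) (w : G) :
    f (w⁻¹ * z₀) = f (σ w * z₀) := by
  simpa [h.apply_one hf, sub_eq_zero] using h 1 w

theorem apply_inv_map (h : IsSolution σ z₀ f) (hσ : Function.Involutive σ) (hf : f ≠ 0) (x : G) :
    f (σ x)⁻¹ = -f x := by
  obtain ⟨y, hy⟩ : ∃ y, f y ≠ 0 := Function.ne_iff.mp hf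
  have h₁ : f (y⁻¹ * x * z₀) = f ((σ x)⁻¹ * σ y * z₀) := by
    simpa using h.apply_inv_mul hf (x⁻¹ * y)
  have h₂ : f (x * σ y * z₀) = f (y⁻¹ * (σ x)⁻¹ * z₀) := by
    simpa [hσ x] using (h.apply_inv_mul hf (σ x * y)).symm
  have key : (f (σ x)⁻¹ + f x) * f y = 0 := by
    linear_combination (-(h x y) - h (σ x)⁻¹ y + h₁ - h₂) / 2
  simpa [hy, add_eq_zero_iff_eq_neg] using key

theorem apply_mul_map_mul (h : IsSolution σ z₀ f) (hz : z₀ ∈ Subgroup.center G) (x : G) :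
    f (x * σ z₀ * z₀) = f x * (1 - 2 * f z₀) := by
  have hx : z₀⁻¹ * x * z₀ = x := by
    rw [mul_assoc, Subgroup.mem_center_iff.mp hz, inv_mul_cancel_left]
  have := h x z₀
  rw [hx] at this
  linear_combination -this

theorem apply_center_mul_self (h : IsSolution σ z₀ f) (hσ : Function.Involutive σ) (hf : f ≠ 0)
    (hz : z₀ ∈ Subgroup.center G) : f z₀ * f z₀ = f z₀ := by
  have := h.apply_mul_map_mul hz (σ z₀)⁻¹
  rw [inv_mul_cancel, one_mul, h.apply_inv_map hσ hf] at this
  linear_combination -this / 2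

theorem apply_inv_center_mul_self (h : IsSolution σ z₀ f) (hσ : Function.Involutive σ)
    (hf : f ≠ 0) (hz : z₀ ∈ Subgroup.center G) : f z₀⁻¹ * f z₀⁻¹ = f z₀ := by
  have := h z₀⁻¹ z₀⁻¹
  rw [inv_inv, mul_inv_cancel, one_mul, mul_assoc, Subgroup.mem_center_iff.mp hz (σ z₀⁻¹),
    inv_mul_cancel_left, map_inv, h.apply_inv_map hσ hf] at this
  linear_combination -this / 2

theorem apply_center_mul_apply_pow_three (h : IsSolution σ z₀ f) (hσ : Function.Involutive σ)
    (hf : f ≠ 0) (hz : z₀ ∈ Subgroup.center G) :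
    f z₀ * f (z₀ ^ 3) = f z₀ * f z₀⁻¹ := by
  have h₁ := h z₀ z₀⁻¹
  have h₂ := h.apply_mul_map_mul hz (z₀ * σ z₀⁻¹ * z₀)
  have e₁ : z₀⁻¹⁻¹ * z₀ * z₀ = z₀ ^ 3 := by rw [inv_inv, pow_three, mul_assoc]
  have e₂ : z₀ * σ z₀⁻¹ * z₀ * σ z₀ * z₀ = z₀ ^ 3 := by
    rw [mul_assoc (z₀ * σ z₀⁻¹) z₀, ← Subgroup.mem_center_iff.mp hz (σ z₀), ← mul_assoc,
      mul_assoc z₀ (σ z₀⁻¹), ← map_mul, inv_mul_cancel, map_one, mul_one, ← e₁, inv_inv]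
  rw [e₁] at h₁
  rw [e₂] at h₂
  have ha := h.apply_center_mul_self hσ hf hz
  linear_combination (h₂ - (1 - 2 * f z₀) * h₁ + 4 * f z₀⁻¹ * ha) / 2

theorem apply_mul_center_mul (h : IsSolution σ z₀ f) (hz : z₀ ∈ Subgroup.center G) (ha : f z₀ = 0)
    (x y : G) : f (x * z₀) * f (y * z₀) = f x * f y := by
  have hc := Subgroup.mem_center_iff.mp hz
  have h₁ := h (x * z₀) (y * z₀)
  have e₁ : (y * z₀)⁻¹ * (x * z₀) * z₀ = y⁻¹ * x * z₀ := by
    rw [mul_inv_rev, hc]; group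
  have e₂ : x * z₀ * σ (y * z₀) * z₀ = x * σ y * z₀ * σ z₀ * z₀ := by
    rw [map_mul, ← mul_assoc, mul_assoc x z₀ (σ y), ← hc (σ y), ← mul_assoc]
  rw [e₁, e₂, h.apply_mul_map_mul hz, ha] at h₁
  linear_combination (h x y - h₁) / 2

theorem apply_pow_eq_zero (h : IsSolution σ z₀ f) (hf : f ≠ 0) (hz : z₀ ∈ Subgroup.center G)
    (ha : f z₀ = 0) (n : ℕ) : f (z₀ ^ n) = 0 := by
  obtain ⟨y, hy⟩ : ∃ y, f y ≠ 0 := Function.ne_iff.mp hf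
  have hyz : f (y * z₀) ≠ 0 := by
    intro h0
    have := h.apply_mul_center_mul hz ha y y
    simp_all
  induction n with
  | zero => rw [pow_zero, h.apply_one hf]
  | succ n ih =>
    have := h.apply_mul_center_mul hz ha (z₀ ^ n) y
    rw [← pow_succ, ih, zero_mul] at this
    simpa [hyz] using this

end IsSolution

end

theorem stmt15 {G : Type*} [Group G] (σ : G → G)
    (hσmul : ∀ x y : G, σ (x * y) = σ x * σ y) (hσinv : ∀ x : G, σ (σ x) = x)
    (z₀ : G) (hz₀ : z₀ ∈ Subgroup.center G)
    (f : G → ℂ) (hf : f ≠ 0)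
    (heq : ∀ x y : G, f (y⁻¹ * x * z₀) - f (x * σ y * z₀) = 2 * f x * f y) :
    f (z₀ ^ 3) = f z₀⁻¹ ∧ f z₀⁻¹ = - f (σ z₀) := by
  let σ' : G →* G := MonoidHom.mk' σ hσmul
  have h : IsSolution σ' z₀ f := heq
  have hσ : Function.Involutive σ' := hσinv
  have hodd := h.apply_inv_map hσ hf (σ' z₀)
  rw [hσ z₀] at hodd
  refine ⟨?_, hodd⟩
  by_cases ha : f z₀ = 0
  · have hb := h.apply_inv_center_mul_self hσ hf hz₀
    rw [ha, mul_self_eq_zero] at hb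
    rw [hb, h.apply_pow_eq_zero hf hz₀ ha]
  · exact mul_left_cancel₀ ha (h.apply_center_mul_apply_pow_three hσ hf hz₀)
end

section
/- Suppose σ(z₀)z₀ = e. Then the only solution f : G → ℂ of the functional equation f(y⁻¹xz₀) − f(xσ(y)z₀) = 2f(x)f(y) for all x, y ∈ G is f = 0. -/
/-!
Putting `x = y = 1` gives `f 1 = 0`, and then `x = 1` shows that `f` is invariant under the
anti-automorphism `τ w = σ w⁻¹` (this is where `σ z₀ = z₀⁻¹` enters). Since `τ` maps the two
arguments `y⁻¹ x z₀` and `x σ(y) z₀` of the equation to `x σ(y) z₀` and `y⁻¹ x z₀` with `x`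
replaced by `τ x`, comparing the equation at `(x, y)` and `(τ x, y)` gives
`2 f(x) f(y) = -2 f(x) f(y)`, so `f(x)² = 0`.
-/

section

variable {G K : Type*} [Group G] [Field K]

def SolvesVanVleckType (σ : G →* G) (z₀ : G) (f : G → K) : Prop :=
  ∀ x y : G, f (y⁻¹ * x * z₀) - f (x * σ y * z₀) = 2 * f x * f y

section CentralInvolution

variable {σ : G →* G} {z₀ : G}

theorem map_inv_inv_mul_mul_of_mem_center (hz₀ : z₀ ∈ Subgroup.center G) (hz : σ z₀ * z₀ = 1)
    (x y : G) : σ (y⁻¹ * x * z₀)⁻¹ = σ x⁻¹ * σ y * z₀ := by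
  simp only [mul_inv_rev, inv_inv, map_mul, map_inv, eq_inv_of_mul_eq_one_left hz]
  exact (Subgroup.mem_center_iff.mp hz₀ _).symm

theorem map_inv_mul_map_mul_of_mem_center (hσ : ∀ x, σ (σ x) = x)
    (hz₀ : z₀ ∈ Subgroup.center G) (hz : σ z₀ * z₀ = 1) (x y : G) :
    σ (x * σ y * z₀)⁻¹ = y⁻¹ * σ x⁻¹ * z₀ := by
  simp only [mul_inv_rev, inv_inv, map_mul, map_inv, hσ, eq_inv_of_mul_eq_one_left hz]
  exact (Subgroup.mem_center_iff.mp hz₀ _).symm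

end CentralInvolution

namespace SolvesVanVleckType

variable {σ : G →* G} {z₀ : G} {f : G → K}

theorem apply_one [NeZero (2 : K)] (h : SolvesVanVleckType σ z₀ f) : f 1 = 0 := by
  have h11 := h 1 1
  simp only [inv_one, mul_one, map_one, sub_self] at h11
  rw [mul_assoc] at h11
  exact mul_self_eq_zero.mp <| (mul_eq_zero.mp h11.symm).resolve_left two_ne_zero

theorem apply_map_inv [NeZero (2 : K)] (h : SolvesVanVleckType σ z₀ f)
    (hz₀ : z₀ ∈ Subgroup.center G) (hz : σ z₀ * z₀ = 1) (w : G) : f (σ w⁻¹) = f w := by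
  have hσz : σ z₀ = z₀⁻¹ := eq_inv_of_mul_eq_one_left hz
  have hw := h 1 (z₀ * w⁻¹)
  rw [h.apply_one, mul_zero, zero_mul, sub_eq_zero, one_mul, mul_one] at hw
  calc f (σ w⁻¹) = f (σ (z₀ * w⁻¹) * z₀) := by
        rw [map_mul, hσz, mul_assoc, Subgroup.mem_center_iff.mp hz₀, inv_mul_cancel_left]
    _ = f w := by rw [← hw]; group

theorem eq_zero [NeZero (2 : K)] (h : SolvesVanVleckType σ z₀ f) (hσ : ∀ x, σ (σ x) = x)
    (hz₀ : z₀ ∈ Subgroup.center G) (hz : σ z₀ * z₀ = 1) : f = 0 := by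
  have hτ := h.apply_map_inv hz₀ hz
  have hmul : ∀ x y, f x * f y = 0 := by
    intro x y
    have hxy := h x y
    have hτxy := h (σ x⁻¹) y
    rw [← hτ (y⁻¹ * x * z₀), ← hτ (x * σ y * z₀), map_inv_inv_mul_mul_of_mem_center hz₀ hz,
      map_inv_mul_map_mul_of_mem_center hσ hz₀ hz] at hxy
    rw [hτ x] at hτxy
    have h4 : (2 * 2 : K) * (f x * f y) = 0 := by linear_combination -(hxy + hτxy)
    exact (mul_eq_zero.mp h4).resolve_left (mul_ne_zero two_ne_zero two_ne_zero)
  funext x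
  exact mul_self_eq_zero.mp (hmul x x)

end SolvesVanVleckType

end

theorem stmt16 {G : Type*} [Group G] (σ : G → G)
    (hσmul : ∀ x y : G, σ (x * y) = σ x * σ y) (hσinv : ∀ x : G, σ (σ x) = x)
    (z₀ : G) (hz₀ : z₀ ∈ Subgroup.center G) (hz : σ z₀ * z₀ = 1)
    (f : G → ℂ)
    (heq : ∀ x y : G, f (y⁻¹ * x * z₀) - f (x * σ y * z₀) = 2 * f x * f y) :
    f = 0 :=
  SolvesVanVleckType.eq_zero (σ := MonoidHom.mk' σ hσmul) heq hσinv hz₀ hz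
end

section
/- Let f : M → ℂ be a non-zero abelian continuous solution of the functional equation f(xσ(y)z₀) + f(τ(y)xz₀) = 2f(x)f(y) for all x, y ∈ M. Then there exists a continuous multiplicative function χ : M → ℂ such that (i) χ∘σ∘τ = χ∘τ∘σ, (ii) χ∘σ = χ or χ∘τ = χ, (iii) χ(σ(τ(z₀))) = χ(z₀) = f(e), and f = f(e)·(χ + χ∘σ∘τ)/2. -/
/-!
Normalising `F = f / f e` (if `f e = 0`, then `y = e` gives `f (x z₀) = 0` and the equation
at `y = x` gives `f x ^ 2 = 0`), the equation becomes `F (x σ y) + F (x τ y) = 2 F x F y` with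
`F e = 1` and `F (x z₀) = F x F z₀`. Substituting `y σ z` and `y τ z` for `y` and permuting
factors under `F` shows that the multiplicative defect `B x y = F (x y) - F x F y` satisfies
`B (x y) z = F x B y z + F y B x z`. For abelian `F` this forces `B` to have rank one,
`B x y = s x s y`, where `s` obeys the sine addition law `s (x y) = F x s y + F y s x`;
hence `χ = F + s` and `χ' = F - s` are multiplicative and `F = (χ + χ') / 2`.
Now `χ ∘ σ + χ ∘ τ = χ + χ'`, and two pairs of multiplicative functions with the same sum
agree up to order, so `χ ∘ σ = χ, χ ∘ τ = χ'` or `χ ∘ σ = χ', χ ∘ τ = χ`; either way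
`χ ∘ σ ∘ τ = χ ∘ τ ∘ σ = χ'`. Finally `B z₀ z₀ = 0` gives `s z₀ = 0`, so
`χ z₀ = χ' z₀ = F z₀ = f e`.
-/

open Function

def IsMultiplicative {M K : Type*} [Mul M] [Mul K] (χ : M → K) : Prop :=
  ∀ x y, χ (x * y) = χ x * χ y

theorem eq_or_eq_neg_of_forall_mul_eq_mul {X K : Type*} [CommRing K] [IsDomain K] {u v : X → K}
    (huv : ∀ x y, u x * u y = v x * v y) : u = v ∨ u = -v := by
  by_cases hv : v = 0
  · left
    funext x
    have hx : u x * u x = 0 := by simpa [hv] using huv x x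
    simpa [hv] using mul_self_eq_zero.mp hx
  obtain ⟨a, ha⟩ := Function.ne_iff.mp hv
  rcases mul_self_eq_mul_self_iff.mp (huv a a) with h | h
  · exact Or.inl <| funext fun x => mul_right_cancel₀ ha <| by linear_combination huv x a - u x * h
  · exact Or.inr <| funext fun x => mul_right_cancel₀ ha <| by
      simp only [Pi.neg_apply]
      linear_combination -huv x a + u x * h

theorem IsMultiplicative.eq_and_eq_or_eq_and_eq_of_add_eq_add {M K : Type*} [Mul M] [Field K]
    [NeZero (2 : K)] {α β γ δ : M → K} (hα : IsMultiplicative α) (hβ : IsMultiplicative β)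
    (hγ : IsMultiplicative γ) (hδ : IsMultiplicative δ) (h : α + β = γ + δ) :
    (α = γ ∧ β = δ) ∨ (α = δ ∧ β = γ) := by
  have hx : ∀ x, α x + β x = γ x + δ x := fun x => congrFun h x
  have hdiff : ∀ x y, (α - β) x * (α - β) y = (γ - δ) x * (γ - δ) y := by
    intro x y
    have hxy := hx (x * y)
    rw [hα, hβ, hγ, hδ] at hxy
    simp only [Pi.sub_apply]
    linear_combination 2 * hxy - (α y + β y) * hx x - (γ x + δ x) * hx y
  rcases eq_or_eq_neg_of_forall_mul_eq_mul hdiff with h' | h'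
  · have hd : ∀ x, α x - β x = γ x - δ x := fun x => congrFun h' x
    refine Or.inl ⟨funext fun x => ?_, funext fun x => ?_⟩ <;>
      apply mul_left_cancel₀ (two_ne_zero (α := K))
    · linear_combination hx x + hd x
    · linear_combination hx x - hd x
  · have hd : ∀ x, α x - β x = δ x - γ x := fun x => by simpa using congrFun h' x
    refine Or.inr ⟨funext fun x => ?_, funext fun x => ?_⟩ <;>
      apply mul_left_cancel₀ (two_ne_zero (α := K))
    · linear_combination hx x + hd x
    · linear_combination hx x - hd x

theorem IsMultiplicative.comp_of_map_mul {M N K : Type*} [Mul M] [Mul N] [Mul K] {χ : N → K}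
    {σ : M → N} (hχ : IsMultiplicative χ) (hσ : ∀ x y, σ (x * y) = σ x * σ y) :
    IsMultiplicative (χ ∘ σ) :=
  fun x y => (congrArg χ (hσ x y)).trans (hχ _ _)

theorem IsMultiplicative.comp_of_map_mul_rev {M N K : Type*} [Mul M] [Mul N] [CommMagma K]
    {χ : N → K} {τ : M → N} (hχ : IsMultiplicative χ) (hτ : ∀ x y, τ (x * y) = τ y * τ x) :
    IsMultiplicative (χ ∘ τ) :=
  fun x y => (congrArg χ (hτ x y)).trans ((hχ _ _).trans (mul_comm _ _))

theorem comp_comp_eq_of_comp_eq {X K : Type*} [AddCancelCommMonoid K] {σ τ : X → X}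
    (hτ : Involutive τ) {χ χ' : X → K} (h : χ' ∘ σ + χ' ∘ τ = χ + χ') (hσχ : χ ∘ σ = χ)
    (hτχ : χ ∘ τ = χ') : χ ∘ σ ∘ τ = χ' ∧ χ ∘ τ ∘ σ = χ' := by
  have hτχ' : χ' ∘ τ = χ := by rw [← hτχ, comp_assoc, hτ.comp_self, comp_id]
  refine ⟨by rw [← comp_assoc, hσχ, hτχ], ?_⟩
  rw [hτχ', add_comm χ] at h
  rw [← comp_assoc, hτχ]
  exact add_right_cancel h

def mulDefect {M K : Type*} [Mul M] [Ring K] (F : M → K) (x y : M) : K :=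
  F (x * y) - F x * F y

theorem exists_continuous_eq_mul_of_rank_one {X K : Type*} [TopologicalSpace X] [Field K]
    [IsAlgClosed K] [TopologicalSpace K] [ContinuousMul K] {B : X → X → K}
    (hB : ∀ x y z w, B x y * B z w = B x z * B y w) (hcont : ∀ y, Continuous (B · y)) :
    ∃ s : X → K, Continuous s ∧ ∀ x y, B x y = s x * s y := by
  by_cases h0 : ∀ x y, B x y = 0
  · exact ⟨0, continuous_const, by simpa using h0⟩
  push Not at h0
  obtain ⟨a, b, hab⟩ := h0
  have haa : B a a ≠ 0 := fun h => hab (mul_self_eq_zero.mp (by rw [hB, h, zero_mul]))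
  obtain ⟨c, hc⟩ := IsAlgClosed.exists_eq_mul_self (B a a)
  have hc0 : c ≠ 0 := by rintro rfl; exact haa (by simpa using hc)
  refine ⟨fun x => B x a / c, (hcont a).div_const c, fun x y => ?_⟩
  rw [div_mul_div_comm, ← hc, eq_div_iff haa]
  exact hB x y a a

theorem isMultiplicative_add_of_sine {M K : Type*} [Mul M] [CommRing K] {F s : M → K}
    (hs : ∀ x y, mulDefect F x y = s x * s y) (hadd : ∀ x y, s (x * y) = F x * s y + F y * s x) :
    IsMultiplicative (F + s) := fun x y => by
  have := hs x y
  simp only [mulDefect] at this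
  simp only [Pi.add_apply]
  linear_combination this + hadd x y

theorem isMultiplicative_sub_of_sine {M K : Type*} [Mul M] [CommRing K] {F s : M → K}
    (hs : ∀ x y, mulDefect F x y = s x * s y) (hadd : ∀ x y, s (x * y) = F x * s y + F y * s x) :
    IsMultiplicative (F - s) := fun x y => by
  have := hs x y
  simp only [mulDefect] at this
  simp only [Pi.sub_apply]
  linear_combination this - hadd x y

section AbelianFunctions

variable {M : Type*} [Monoid M] {f : M → ℂ}

theorem IsAbelianFn.apply_mul_comm (hf : IsAbelianFn f) (a b : M) : f (a * b) = f (b * a) := by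
  simpa [Equiv.swap_apply_def] using hf 2 le_rfl ![a, b] (Equiv.swap 0 1)

theorem IsAbelianFn.apply_mul_right_comm (hf : IsAbelianFn f) (a b c : M) :
    f (a * b * c) = f (a * c * b) := by
  simpa [Equiv.swap_apply_def, mul_assoc] using hf 3 (by norm_num) ![a, b, c] (Equiv.swap 1 2)

theorem IsAbelianFn.apply_mul_mul_mul_comm (hf : IsAbelianFn f) (a b c d : M) :
    f (a * b * (c * d)) = f (a * c * (b * d)) := by
  simpa [Equiv.swap_apply_def, mul_assoc] using hf 4 (by norm_num) ![a, b, c, d] (Equiv.swap 1 2)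

theorem IsAbelianFn.div_const (hf : IsAbelianFn f) (c : ℂ) : IsAbelianFn (fun x => f x / c) :=
  fun n hn x ε => congrArg (· / c) (hf n hn x ε)

theorem IsAbelianFn.mulDefect_mul_mulDefect (hf : IsAbelianFn f)
    (hD : ∀ x y z, mulDefect f (x * y) z = f x * mulDefect f y z + f y * mulDefect f x z)
    (x y z w : M) : mulDefect f x y * mulDefect f z w = mulDefect f x z * mulDefect f y w := by
  have expand : ∀ x z w : M, f (x * (z * w))
      = f (z * w) * f x + f (x * z) * f w + f (x * w) * f z - 2 * f z * f w * f x := by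
    intro x z w
    have := hD z w x
    simp only [mulDefect] at this
    linear_combination this + hf.apply_mul_comm x (z * w) + f w * hf.apply_mul_comm z x
      + f z * hf.apply_mul_comm w x
  have H1 := hD x y (z * w)
  have H2 := hD x z (y * w)
  simp only [mulDefect] at H1 H2 ⊢
  linear_combination H2 + f x * expand z y w + f x * f w * hf.apply_mul_comm z y
    + f z * expand x y w + hf.apply_mul_mul_mul_comm x y z w - H1 - f x * expand y z w
    - f y * expand x z w

theorem IsAbelianFn.exists_sine_of_mulDefect_mul [TopologicalSpace M] [ContinuousMul M]
    (hf : IsAbelianFn f) (hfc : Continuous f)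
    (hD : ∀ x y z, mulDefect f (x * y) z = f x * mulDefect f y z + f y * mulDefect f x z) :
    ∃ s : M → ℂ, Continuous s ∧ (∀ x y, mulDefect f x y = s x * s y) ∧
      ∀ x y, s (x * y) = f x * s y + f y * s x := by
  obtain ⟨s, hsc, hs⟩ := exists_continuous_eq_mul_of_rank_one (hf.mulDefect_mul_mulDefect hD)
    fun y => (hfc.comp (continuous_mul_const y)).sub (hfc.mul continuous_const)
  refine ⟨s, hsc, hs, fun x y => ?_⟩
  by_cases hs0 : s = 0
  · simp [hs0]
  obtain ⟨w, hw⟩ := Function.ne_iff.mp hs0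
  refine mul_right_cancel₀ hw ?_
  rw [← hs, hD, hs, hs]
  ring

end AbelianFunctions

section DAlembert

variable {M : Type*} [Monoid M] {σ τ : M → M} {F : M → ℂ}

theorem map_one_of_map_mul (hσmul : ∀ x y, σ (x * y) = σ x * σ y) (hσ : Involutive σ) :
    σ 1 = 1 := by
  simpa [hσ 1] using (hσmul 1 (σ 1)).symm

theorem map_one_of_map_mul_rev (hτmul : ∀ x y, τ (x * y) = τ y * τ x) (hτ : Involutive τ) :
    τ 1 = 1 := by
  simpa [hτ 1] using (hτmul (τ 1) 1).symm

theorem apply_map_add_apply_map (hF1 : F 1 = 1)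
    (hE : ∀ x y, F (x * σ y) + F (x * τ y) = 2 * F x * F y) (y : M) :
    F (σ y) + F (τ y) = 2 * F y := by
  simpa [hF1] using hE 1 y

theorem apply_mul_twist_add_apply_mul_twist (hσmul : ∀ x y, σ (x * y) = σ x * σ y)
    (hσ : Involutive σ) (hτmul : ∀ x y, τ (x * y) = τ y * τ x) (hτ : Involutive τ)
    (hF : IsAbelianFn F) (hE : ∀ x y, F (x * σ y) + F (x * τ y) = 2 * F x * F y) (x y z : M) :
    F (x * σ (τ z) * σ y) + F (x * τ (σ z) * τ y) = 2 * F y * (2 * F x * F z - F (x * z)) := by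
  have hσz := hE x (y * σ z)
  rw [hσmul, hσ, hτmul, ← mul_assoc, ← mul_assoc, hF.apply_mul_right_comm x (σ y) z] at hσz
  have hτz := hE x (y * τ z)
  rw [hσmul, hτmul, hτ, ← mul_assoc, ← mul_assoc,
    hF.apply_mul_right_comm x (σ y) (σ (τ z))] at hτz
  linear_combination hσz + hτz - hE (x * z) y + 2 * F x * hE y z

theorem mulDefect_mul_of_dAlembert (hσmul : ∀ x y, σ (x * y) = σ x * σ y)
    (hσ : Involutive σ) (hτmul : ∀ x y, τ (x * y) = τ y * τ x) (hτ : Involutive τ)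
    (hF : IsAbelianFn F) (hF1 : F 1 = 1) (hE : ∀ x y, F (x * σ y) + F (x * τ y) = 2 * F x * F y)
    (x y z : M) : mulDefect F (x * y) z = F x * mulDefect F y z + F y * mulDefect F x z := by
  have twist := apply_mul_twist_add_apply_mul_twist hσmul hσ hτmul hτ hF hE
  have twist_one : ∀ x z, F (x * σ (τ z)) + F (x * τ (σ z)) = 4 * F x * F z - 2 * F (x * z) := by
    intro x z
    have h := twist x 1 z
    rw [map_one_of_map_mul hσmul hσ, map_one_of_map_mul_rev hτmul hτ, mul_one, mul_one, hF1] at h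
    linear_combination h
  -- At `σ y` and `τ y` the twisted identity involves `F (x τ (σ (y z)))` and `F (x σ (τ (y z)))`,
  -- whose sum `twist_one x (y z)` evaluates.
  have hσy := twist x (σ y) z
  rw [hσ, hF.apply_mul_right_comm x (σ (τ z)) y,
    show x * τ (σ z) * τ (σ y) = x * τ (σ (y * z)) by rw [hσmul, hτmul, mul_assoc]] at hσy
  have hτy := twist x (τ y) z
  rw [hτ, hF.apply_mul_right_comm x (τ (σ z)) y,
    show x * σ (τ z) * σ (τ y) = x * σ (τ (y * z)) by rw [hτmul, hσmul, mul_assoc]] at hτy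
  have hxy := twist_one (x * y) z
  have hyz := twist_one x (y * z)
  rw [← mul_assoc] at hyz
  simp only [mulDefect]
  linear_combination (hxy + hyz - hσy - hτy) / 4
    - (2 * F x * F z - F (x * z)) / 2 * apply_map_add_apply_map hF1 hE y

theorem apply_map_add_apply_map_eq_zero_of_mulDefect (hF1 : F 1 = 1)
    (hE : ∀ x y, F (x * σ y) + F (x * τ y) = 2 * F x * F y) {s : M → ℂ}
    (hs : ∀ x y, mulDefect F x y = s x * s y) (y : M) : s (σ y) + s (τ y) = 0 := by
  by_cases hs0 : s = 0
  · simp [hs0]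
  obtain ⟨w, hw⟩ := Function.ne_iff.mp hs0
  refine mul_left_cancel₀ hw ?_
  have hσ := hs w (σ y)
  have hτ := hs w (τ y)
  simp only [mulDefect] at hσ hτ
  linear_combination -hσ - hτ + hE w y - F w * apply_map_add_apply_map hF1 hE y

theorem exists_multiplicative_of_dAlembert [TopologicalSpace M] [ContinuousMul M]
    (hσmul : ∀ x y, σ (x * y) = σ x * σ y) (hσ : Involutive σ)
    (hτmul : ∀ x y, τ (x * y) = τ y * τ x) (hτ : Involutive τ)
    (hF : IsAbelianFn F) (hFc : Continuous F) (hF1 : F 1 = 1)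
    (hE : ∀ x y, F (x * σ y) + F (x * τ y) = 2 * F x * F y) :
    ∃ χ : M → ℂ, Continuous χ ∧ IsMultiplicative χ ∧ χ ∘ σ ∘ τ = χ ∘ τ ∘ σ ∧
      (χ ∘ σ = χ ∨ χ ∘ τ = χ) ∧ ∀ x, F x = (χ x + χ (σ (τ x))) / 2 ∧
        (χ x - χ (σ (τ x))) ^ 2 = 4 * mulDefect F x x := by
  obtain ⟨s, hsc, hs, hadd⟩ :=
    hF.exists_sine_of_mulDefect_mul hFc (mulDefect_mul_of_dAlembert hσmul hσ hτmul hτ hF hF1 hE)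
  have hχ := isMultiplicative_add_of_sine hs hadd
  have hFστ := apply_map_add_apply_map hF1 hE
  have hsστ := apply_map_add_apply_map_eq_zero_of_mulDefect hF1 hE hs
  have hsum_add : (F + s) ∘ σ + (F + s) ∘ τ = (F + s) + (F - s) := funext fun y => by
    simp only [Pi.add_apply, Pi.sub_apply, comp_apply]
    linear_combination hFστ y + hsστ y
  have hsum_sub : (F - s) ∘ σ + (F - s) ∘ τ = (F + s) + (F - s) := funext fun y => by
    simp only [Pi.add_apply, Pi.sub_apply, comp_apply]
    linear_combination hFστ y - hsστ y
  obtain ⟨hστ, hτσ, hor⟩ : (F + s) ∘ σ ∘ τ = F - s ∧ (F + s) ∘ τ ∘ σ = F - s ∧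
      ((F + s) ∘ σ = F + s ∨ (F + s) ∘ τ = F + s) := by
    rcases (hχ.comp_of_map_mul hσmul).eq_and_eq_or_eq_and_eq_of_add_eq_add
      (hχ.comp_of_map_mul_rev hτmul) hχ (isMultiplicative_sub_of_sine hs hadd) hsum_add
      with ⟨hσχ, hτχ⟩ | ⟨hσχ, hτχ⟩
    · obtain ⟨hστ, hτσ⟩ := comp_comp_eq_of_comp_eq hτ hsum_sub hσχ hτχ
      exact ⟨hστ, hτσ, Or.inl hσχ⟩
    · obtain ⟨hτσ, hστ⟩ := comp_comp_eq_of_comp_eq hσ ((add_comm _ _).trans hsum_sub) hτχ hσχ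
      exact ⟨hστ, hτσ, Or.inr hτχ⟩
  refine ⟨F + s, hFc.add hsc, hχ, hστ.trans hτσ.symm, hor, fun x => ?_⟩
  rw [show (F + s) (σ (τ x)) = F x - s x from congrFun hστ x, Pi.add_apply, hs]
  constructor <;> ring

end DAlembert

section Reduction

variable {M : Type*} [Monoid M] {σ τ : M → M} {z₀ : M} {f : M → ℂ}

theorem apply_mul_eq_mul_apply_one (hσmul : ∀ x y, σ (x * y) = σ x * σ y) (hσ : Involutive σ)
    (hτmul : ∀ x y, τ (x * y) = τ y * τ x) (hτ : Involutive τ)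
    (heq : ∀ x y, f (x * σ y * z₀) + f (τ y * x * z₀) = 2 * f x * f y) (x : M) :
    f (x * z₀) = f x * f 1 := by
  have h := heq x 1
  rw [map_one_of_map_mul hσmul hσ, map_one_of_map_mul_rev hτmul hτ, mul_one, one_mul] at h
  linear_combination h / 2

theorem apply_one_ne_zero (hf : f ≠ 0)
    (heq : ∀ x y, f (x * σ y * z₀) + f (τ y * x * z₀) = 2 * f x * f y)
    (hz : ∀ x, f (x * z₀) = f x * f 1) : f 1 ≠ 0 := by
  refine fun h0 => hf (funext fun x => mul_self_eq_zero.mp ?_)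
  have h := heq x x
  rw [hz, hz, h0] at h
  linear_combination -h / 2

theorem dAlembert_div_apply_one (hf : IsAbelianFn f)
    (heq : ∀ x y, f (x * σ y * z₀) + f (τ y * x * z₀) = 2 * f x * f y)
    (hz : ∀ x, f (x * z₀) = f x * f 1) (hc : f 1 ≠ 0) (x y : M) :
    f (x * σ y) / f 1 + f (x * τ y) / f 1 = 2 * (f x / f 1) * (f y / f 1) := by
  have h := heq x y
  rw [hz, hz, hf.apply_mul_comm (τ y) x] at h
  field_simp
  linear_combination h

end Reduction

theorem stmt18_general {M : Type*} [Monoid M] [TopologicalSpace M] [ContinuousMul M] (σ τ : M → M)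
    (hσmul : ∀ x y : M, σ (x * y) = σ x * σ y) (hσinv : ∀ x : M, σ (σ x) = x)
    (hτmul : ∀ x y : M, τ (x * y) = τ y * τ x) (hτinv : ∀ x : M, τ (τ x) = x)
    (z₀ : M) (f : M → ℂ) (hf : f ≠ 0) (hfcont : Continuous f) (habel : IsAbelianFn f)
    (heq : ∀ x y : M, f (x * σ y * z₀) + f (τ y * x * z₀) = 2 * f x * f y) :
    ∃ χ : M → ℂ, Continuous χ ∧ (∀ x y : M, χ (x * y) = χ x * χ y) ∧
      (∀ x : M, χ (σ (τ x)) = χ (τ (σ x))) ∧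
      ((∀ x : M, χ (σ x) = χ x) ∨ (∀ x : M, χ (τ x) = χ x)) ∧
      χ (σ (τ z₀)) = χ z₀ ∧ χ z₀ = f 1 ∧
      (∀ x : M, f x = f 1 * (χ x + χ (σ (τ x))) / 2) := by
  have hz := apply_mul_eq_mul_apply_one hσmul hσinv hτmul hτinv heq
  have hc := apply_one_ne_zero hf heq hz
  obtain ⟨χ, hχc, hχ, hcomm, hor, hF⟩ := exists_multiplicative_of_dAlembert hσmul hσinv hτmul
    hτinv (habel.div_const (f 1)) (hfcont.div_const _) (div_self hc)
    (dAlembert_div_apply_one habel heq hz hc)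
  have hz₀ : f z₀ = f 1 * f 1 := by simpa using hz 1
  have hdefect : mulDefect (fun x => f x / f 1) z₀ z₀ = 0 := by
    simp only [mulDefect, hz, hz₀]
    field_simp
    ring
  obtain ⟨hFz₀, hsq⟩ := hF z₀
  have hχz₀ : χ (σ (τ z₀)) = χ z₀ :=
    (sub_eq_zero.mp (pow_eq_zero_iff two_ne_zero |>.mp (by rw [hsq, hdefect, mul_zero]))).symm
  refine ⟨χ, hχc, hχ, congrFun hcomm, hor.imp congrFun congrFun, hχz₀, ?_, fun x => ?_⟩
  · rw [hχz₀, hz₀, mul_div_cancel_right₀ _ hc] at hFz₀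
    linear_combination -hFz₀
  · have hx := (hF x).1
    rw [div_eq_iff hc] at hx
    rw [hx]
    ring

theorem stmt18 {M : Type*} [Monoid M] [TopologicalSpace M] [ContinuousMul M] (σ τ : M → M)
    (hσcont : Continuous σ) (hτcont : Continuous τ)
    (hσmul : ∀ x y : M, σ (x * y) = σ x * σ y) (hσinv : ∀ x : M, σ (σ x) = x)
    (hτmul : ∀ x y : M, τ (x * y) = τ y * τ x) (hτinv : ∀ x : M, τ (τ x) = x)
    (z₀ : M) (f : M → ℂ) (hf : f ≠ 0) (hfcont : Continuous f) (habel : IsAbelianFn f)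
    (heq : ∀ x y : M, f (x * σ y * z₀) + f (τ y * x * z₀) = 2 * f x * f y) :
    ∃ χ : M → ℂ, Continuous χ ∧ (∀ x y : M, χ (x * y) = χ x * χ y) ∧
      (∀ x : M, χ (σ (τ x)) = χ (τ (σ x))) ∧
      ((∀ x : M, χ (σ x) = χ x) ∨ (∀ x : M, χ (τ x) = χ x)) ∧
      χ (σ (τ z₀)) = χ z₀ ∧ χ z₀ = f 1 ∧
      (∀ x : M, f x = f 1 * (χ x + χ (σ (τ x))) / 2) :=
  stmt18_general σ τ hσmul hσinv hτmul hτinv z₀ f hf hfcont habel heq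
end
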